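/- Let W : ℝ³ × ℝ → ℝ^{3×3} be C² and v, V : ℝ³ × ℝ → ℝ³ be C². Define α_{ij} := − e_{jrk} ∂_r W_{ik} (so that the row-wise curl of W equals −α). If W satisfies the elastic-distortion evolution equation ∂_t W_{ij} + v_k ∂_k W_{ij} + W_{im} ∂_j v_m − e_{jmn} α_{im} V_n = 0 on ℝ³ × ℝ for all i, j, then α satisfies the Burgers-vector transport equation ∂_t α_{ij} + e_{jrk} ∂_r ( e_{kmn} α_{im} (v_n + V_n) ) = 0 on ℝ³ × ℝ for all i, j. -/

import Mathlib

open scoped BigOperators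

/-- Levi-Civita symbol on `Fin 3`. -/
noncomputable def eps (i j k : Fin 3) : ℝ :=
  (((i : ℕ) : ℝ) - ((j : ℕ) : ℝ)) * (((j : ℕ) : ℝ) - ((k : ℕ) : ℝ)) *
    (((k : ℕ) : ℝ) - ((i : ℕ) : ℝ)) / 2

/-- Spatial partial derivative in the `r`-th coordinate direction for a field
on space-time `ℝ³ × ℝ`. -/
noncomputable def pdx (r : Fin 3) (f : (Fin 3 → ℝ) × ℝ → ℝ) (z : (Fin 3 → ℝ) × ℝ) : ℝ :=
  fderiv ℝ f z (Pi.single r 1, 0)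

/-- Time partial derivative for a field on space-time `ℝ³ × ℝ`. -/
noncomputable def pdt (f : (Fin 3 → ℝ) × ℝ → ℝ) (z : (Fin 3 → ℝ) × ℝ) : ℝ :=
  fderiv ℝ f z (0, 1)

/-!
Put `φᵢ := W_{ik} v_k`. The identity `v_k ∂_k W_{ij} − v_k ∂_j W_{ik} = ((curl W) × v)_{ij}`
turns the evolution equation into `∂ₜ Wᵢ = αᵢ × (v + V) − ∇φᵢ`. Taking `−curl`, which commutes
with `∂ₜ` and annihilates gradients, gives the transport equation.
-/

open Finset

theorem fderiv_fderiv_apply_comm {E F : Type*} [NormedAddCommGroup E] [NormedSpace ℝ E]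
    [NormedAddCommGroup F] [NormedSpace ℝ F] {f : E → F} {x : E} (hf : ContDiffAt ℝ 2 f x)
    (u w : E) :
    fderiv ℝ (fun y => fderiv ℝ f y w) x u = fderiv ℝ (fun y => fderiv ℝ f y u) x w := by
  have hdiff : DifferentiableAt ℝ (fderiv ℝ f) x :=
    (hf.fderiv_right (m := 1) le_rfl).differentiableAt one_ne_zero
  rw [fderiv_clm_apply hdiff (differentiableAt_const w),
    fderiv_clm_apply hdiff (differentiableAt_const u)]
  simpa using hf.isSymmSndFDerivAt (by simp [minSmoothness_of_isRCLikeNormedField]) u w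

theorem eps_swap_right (j r k : Fin 3) : eps j k r = -eps j r k := by
  unfold eps; ring

theorem sum_eps_mul_eq_zero_of_symm (j : Fin 3) {D : Fin 3 → Fin 3 → ℝ}
    (hD : ∀ r k, D r k = D k r) : ∑ r, ∑ k, eps j r k * D r k = 0 := by
  have h : ∑ r, ∑ k, eps j r k * D r k = -∑ r, ∑ k, eps j r k * D r k :=
    calc ∑ r, ∑ k, eps j r k * D r k = ∑ k, ∑ r, eps j r k * D r k := sum_comm
      _ = ∑ k, ∑ r, -(eps j k r * D k r) := by
        refine sum_congr rfl fun k _ => sum_congr rfl fun r _ => ?_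
        rw [eps_swap_right, hD]; ring
      _ = -∑ r, ∑ k, eps j r k * D r k := by simp only [sum_neg_distrib]
  linarith

section SpaceTime

variable {f g : (Fin 3 → ℝ) × ℝ → ℝ} {z : (Fin 3 → ℝ) × ℝ} {r s : Fin 3} {c : ℝ}

theorem differentiableAt_pdx (hf : ContDiffAt ℝ 2 f z) : DifferentiableAt ℝ (pdx r f) z :=
  ((hf.fderiv_right (m := 1) le_rfl).clm_apply contDiffAt_const).differentiableAt one_ne_zero

theorem pdx_pdx_comm (hf : ContDiffAt ℝ 2 f z) : pdx r (pdx s f) z = pdx s (pdx r f) z :=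
  fderiv_fderiv_apply_comm hf _ _

theorem pdt_pdx_comm (hf : ContDiffAt ℝ 2 f z) : pdt (pdx r f) z = pdx r (pdt f) z :=
  fderiv_fderiv_apply_comm hf _ _

theorem pdx_sub (hf : DifferentiableAt ℝ f z) (hg : DifferentiableAt ℝ g z) :
    pdx r (fun y => f y - g y) z = pdx r f z - pdx r g z := by
  simp [pdx, fderiv_fun_sub hf hg]

theorem pdx_mul (hf : DifferentiableAt ℝ f z) (hg : DifferentiableAt ℝ g z) :
    pdx r (fun y => f y * g y) z = f z * pdx r g z + g z * pdx r f z := by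
  simp [pdx, fderiv_fun_mul hf hg]

theorem pdx_sum {F : Fin 3 → (Fin 3 → ℝ) × ℝ → ℝ} (hF : ∀ k, DifferentiableAt ℝ (F k) z) :
    pdx r (fun y => ∑ k, F k y) z = ∑ k, pdx r (F k) z := by
  simp [pdx, fderiv_fun_sum fun k _ => hF k]

theorem pdt_neg : pdt (fun y => -f y) z = -pdt f z := by
  simp [pdt, fderiv_fun_neg]

theorem pdt_const_mul (hf : DifferentiableAt ℝ f z) :
    pdt (fun y => c * f y) z = c * pdt f z := by
  simp [pdt, fderiv_const_mul hf]

theorem pdt_sum {F : Fin 3 → (Fin 3 → ℝ) × ℝ → ℝ} (hF : ∀ k, DifferentiableAt ℝ (F k) z) :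
    pdt (fun y => ∑ k, F k y) z = ∑ k, pdt (F k) z := by
  simp [pdt, fderiv_fun_sum fun k _ => hF k]

end SpaceTime

noncomputable def curl (F : Fin 3 → (Fin 3 → ℝ) × ℝ → ℝ) (j : Fin 3) (z : (Fin 3 → ℝ) × ℝ) : ℝ :=
  ∑ r, ∑ k, eps j r k * pdx r (F k) z

noncomputable def cross (a b : Fin 3 → (Fin 3 → ℝ) × ℝ → ℝ) (k : Fin 3) (z : (Fin 3 → ℝ) × ℝ) :
    ℝ :=
  ∑ m, ∑ n, eps k m n * a m z * b n z

section VectorCalculus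

variable {F G a b c : Fin 3 → (Fin 3 → ℝ) × ℝ → ℝ} {φ : (Fin 3 → ℝ) × ℝ → ℝ}
  {z : (Fin 3 → ℝ) × ℝ}

theorem differentiableAt_curl (hF : ∀ k, ContDiffAt ℝ 2 (F k) z) (j : Fin 3) :
    DifferentiableAt ℝ (curl F j) z := by
  have := fun r k => differentiableAt_pdx (r := r) (hF k)
  unfold curl; fun_prop

theorem differentiableAt_cross (ha : ∀ m, DifferentiableAt ℝ (a m) z)
    (hb : ∀ n, DifferentiableAt ℝ (b n) z) (k : Fin 3) : DifferentiableAt ℝ (cross a b k) z := by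
  unfold cross; fun_prop

theorem cross_neg_left (k : Fin 3) : cross (-a) b k z = -cross a b k z := by
  simp [cross]

theorem cross_add_right (k : Fin 3) :
    cross a (b + c) k z = cross a b k z + cross a c k z := by
  simp [cross, mul_add, sum_add_distrib]

theorem cross_curl (j : Fin 3) :
    cross (curl F) b j z = ∑ n, b n z * pdx n (F j) z - ∑ n, b n z * pdx j (F n) z := by
  unfold cross curl
  fin_cases j <;> simp [Fin.sum_univ_three, eps] <;> ring

theorem curl_sub (hF : ∀ k, DifferentiableAt ℝ (F k) z) (hG : ∀ k, DifferentiableAt ℝ (G k) z)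
    (j : Fin 3) : curl (fun k y => F k y - G k y) j z = curl F j z - curl G j z := by
  simp only [curl, pdx_sub (hF _) (hG _), mul_sub, sum_sub_distrib]

theorem curl_pdx_eq_zero (hφ : ContDiffAt ℝ 2 φ z) (j : Fin 3) :
    curl (fun k => pdx k φ) j z = 0 :=
  sum_eps_mul_eq_zero_of_symm j fun _ _ => pdx_pdx_comm hφ

theorem pdt_curl (hF : ∀ k, ContDiffAt ℝ 2 (F k) z) (j : Fin 3) :
    pdt (curl F j) z = curl (fun k => pdt (F k)) j z := by
  have hd := fun r k => differentiableAt_pdx (r := r) (hF k)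
  unfold curl
  rw [pdt_sum fun r => by fun_prop]
  refine sum_congr rfl fun r _ => ?_
  rw [pdt_sum fun k => by fun_prop]
  refine sum_congr rfl fun k _ => ?_
  rw [pdt_const_mul (hd r k), pdt_pdx_comm (hF k)]

theorem pdt_eq_cross_sub_pdx_of_evolution (hF : ∀ m, DifferentiableAt ℝ (F m) z)
    (hb : ∀ m, DifferentiableAt ℝ (b m) z) (ha : a = -curl F) {k : Fin 3}
    (hevol : pdt (F k) z + (∑ n, b n z * pdx n (F k) z) + (∑ m, F m z * pdx k (b m) z)
      - cross a c k z = 0) :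
    pdt (F k) z = cross a (b + c) k z - pdx k (fun y => ∑ m, F m y * b m y) z := by
  have hab : cross a b k z = ∑ n, b n z * pdx k (F n) z - ∑ n, b n z * pdx n (F k) z := by
    rw [ha, cross_neg_left, cross_curl]; ring
  have hpdx : pdx k (fun y => ∑ m, F m y * b m y) z
      = ∑ m, (F m z * pdx k (b m) z + b m z * pdx k (F m) z) := by
    rw [pdx_sum (F := fun m y => F m y * b m y) fun m => (hF m).mul (hb m)]
    exact sum_congr rfl fun m _ => pdx_mul (hF m) (hb m)
  rw [cross_add_right, hab, hpdx, sum_add_distrib]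
  linarith

end VectorCalculus

/-- If the inverse elastic distortion `W` evolves by
`∂ₜ W_{ij} + v_k ∂_k W_{ij} + W_{im} ∂_j v_m − (α × V)_{ij} = 0`, with
`α := − curl W` (row-wise), then `α` satisfies the Burgers-vector transport
equation `∂ₜ α_{ij} + e_{jrk} ∂_r (e_{kmn} α_{im}(v_n + V_n)) = 0`. -/
theorem elastic_evolution_implies_transport
    (W : Fin 3 → Fin 3 → (Fin 3 → ℝ) × ℝ → ℝ)
    (v V : Fin 3 → (Fin 3 → ℝ) × ℝ → ℝ)
    (α : Fin 3 → Fin 3 → (Fin 3 → ℝ) × ℝ → ℝ)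
    (hW : ∀ i j, ContDiff ℝ 2 (W i j))
    (hv : ∀ i, ContDiff ℝ 2 (v i))
    (hV : ∀ i, ContDiff ℝ 2 (V i))
    (hαdef : ∀ i j z, α i j z = - ∑ r, ∑ k, eps j r k * pdx r (W i k) z)
    (hevol : ∀ i j z,
      pdt (W i j) z + (∑ k, v k z * pdx k (W i j) z) + (∑ m, W i m z * pdx j (v m) z)
        - ∑ m, ∑ n, eps j m n * α i m z * V n z = 0) :
    ∀ i j z, pdt (α i j) z +
      ∑ r, ∑ k, eps j r k *
        pdx r (fun w => ∑ m, ∑ n, eps k m n * α i m w * (v n w + V n w)) z = 0 := by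
  intro i j z
  have hWd (k : Fin 3) : Differentiable ℝ (W i k) := (hW i k).differentiable two_ne_zero
  have hvd (n : Fin 3) : Differentiable ℝ (v n) := (hv n).differentiable two_ne_zero
  have hα : α i = -curl (W i) := funext fun m => funext (hαdef i m)
  have hWt (k : Fin 3) : pdt (W i k) =
      fun w => cross (α i) (v + V) k w - pdx k (fun y => ∑ m, W i m y * v m y) w :=
    funext fun w => pdt_eq_cross_sub_pdx_of_evolution (fun m => (hWd m).differentiableAt)
      (fun m => (hvd m).differentiableAt) hα (hevol i k w)
  have hφ : ContDiffAt ℝ 2 (fun y => ∑ m, W i m y * v m y) z := by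
    have := hW i; fun_prop
  have hX (k : Fin 3) : DifferentiableAt ℝ (cross (α i) (v + V) k) z := by
    have hαd (m : Fin 3) : DifferentiableAt ℝ (α i m) z := by
      rw [hα]; exact (differentiableAt_curl (fun k => (hW i k).contDiffAt) m).neg
    have hVd (n : Fin 3) : Differentiable ℝ (V n) := (hV n).differentiable two_ne_zero
    exact differentiableAt_cross hαd (fun n => ((hvd n).add (hVd n)).differentiableAt) k
  have hαt : pdt (α i j) z = -curl (fun k => pdt (W i k)) j z := by
    rw [hα, ← pdt_curl fun k => (hW i k).contDiffAt]; exact pdt_neg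
  change pdt (α i j) z + curl (cross (α i) (v + V)) j z = 0
  rw [hαt, show (fun k => pdt (W i k)) = _ from funext hWt,
    curl_sub hX (fun k => differentiableAt_pdx hφ), curl_pdx_eq_zero hφ]
  ring
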